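/- arXiv:math/0509240 — 8 statements merged into one kernel-verified Lean document; each statement's English description precedes it below -/
import Mathlib

section
/- Let n ≥ 1 and let k_1, …, k_n ≥ 1 be integers. The equation n − 1 − t = Σ_{l=1}^n 1/(1 + t + ⋯ + t^{k_l}) has no solution t in [0, ∞) if and only if the star-shaped graph Γ with branch lengths k_1, …, k_n is a Dynkin graph (of type A, D, E_6, E_7 or E_8), i.e. if and only if n ≤ 2, or n = 3 and the multiset {k_1, k_2, k_3} equals {1, 1, m} for some integer m ≥ 1, or {1, 2, 2}, or {1, 2, 3}, or {1, 2, 4}. -/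
lemma S_pos (t : ℝ) (ht : 0 ≤ t) (j : ℕ) : 0 < ∑ i ∈ Finset.range (j+1), t ^ i := by
  have : (1:ℝ) ≤ ∑ i ∈ Finset.range (j+1), t ^ i := by
    calc (1:ℝ) = t ^ 0 := by simp
    _ ≤ _ := Finset.single_le_sum (f := fun i => t ^ i) (fun i _ => pow_nonneg ht i) (by simp)
  linarith

lemma S_inv_ge (t : ℝ) (ht : 0 ≤ t) (j : ℕ) :
    1 - t ≤ 1 / ∑ i ∈ Finset.range (j+1), t ^ i := by
  have hS := S_pos t ht j
  rw [le_div_iff₀ hS]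
  have h1 : (∑ i ∈ Finset.range (j+1), t ^ i) * (t - 1) = t ^ (j+1) - 1 := geom_sum_mul t (j+1)
  have h2 : 0 ≤ t ^ (j+1) := pow_nonneg ht _
  nlinarith [h1, h2]

lemma case11m (t : ℝ) (ht : 0 ≤ t) (m : ℕ) :
    2 - t < 1/(1+t) + (1/(1+t) + 1 / ∑ i ∈ Finset.range (m+1), t ^ i) := by
  have h1 : (0:ℝ) < 1 + t := by linarith
  have hS := S_pos t ht m
  have hinv := S_inv_ge t ht m
  set u := 1 / ∑ i ∈ Finset.range (m+1), t ^ i with hu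
  have hupos : 0 < u := by positivity
  have key : 2 - t - (1/(1+t) + 1/(1+t)) = (t - t^2)/(1+t) := by
    field_simp; ring
  have h2 : (t - t^2)/(1+t) < u := by
    rw [div_lt_iff₀ h1]
    have h3 : (1 - t) * t ≤ u * t := mul_le_mul_of_nonneg_right hinv ht
    nlinarith
  linarith

lemma con11m (t : ℝ) (ht : 0 ≤ t) (m : ℕ)
    (h : (3:ℝ) - 1 - t =
      (({1,1,m} : Multiset ℕ).map (fun j => 1/∑ i ∈ Finset.range (j+1), t^i)).sum) : False := by
  simp only [Multiset.insert_eq_cons, Multiset.map_cons, Multiset.map_singleton,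
    Multiset.sum_cons, Multiset.sum_singleton, Finset.sum_range_succ, Finset.sum_range_zero,
    zero_add, pow_zero, pow_one] at h
  rw [show ∑ i ∈ Finset.range m, t^i + t^m = ∑ i ∈ Finset.range (m+1), t^i from
    (Finset.sum_range_succ _ m).symm] at h
  have := case11m t ht m
  linarith

lemma con122 (t : ℝ) (ht : 0 ≤ t)
    (h : (3:ℝ) - 1 - t =
      (({1,2,2} : Multiset ℕ).map (fun j => 1/∑ i ∈ Finset.range (j+1), t^i)).sum) : False := by
  simp only [Multiset.insert_eq_cons, Multiset.map_cons, Multiset.map_singleton,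
    Multiset.sum_cons, Multiset.sum_singleton, Finset.sum_range_succ, Finset.sum_range_zero,
    zero_add, pow_zero, pow_one] at h
  have hA : (0:ℝ) < 1 + t := by linarith
  have hB : (0:ℝ) < 1 + t + t^2 := by positivity
  field_simp at h
  nlinarith [sq_nonneg (2*t^3-1), pow_nonneg ht 5, sq_nonneg t, mul_nonneg ht ht]

lemma con123 (t : ℝ) (ht : 0 ≤ t)
    (h : (3:ℝ) - 1 - t =
      (({1,2,3} : Multiset ℕ).map (fun j => 1/∑ i ∈ Finset.range (j+1), t^i)).sum) : False := by
  simp only [Multiset.insert_eq_cons, Multiset.map_cons, Multiset.map_singleton,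
    Multiset.sum_cons, Multiset.sum_singleton, Finset.sum_range_succ, Finset.sum_range_zero,
    zero_add, pow_zero, pow_one] at h
  have hA : (0:ℝ) < 1 + t := by linarith
  have hB : (0:ℝ) < 1 + t + t^2 := by positivity
  have hC : (0:ℝ) < 1 + t + t^2 + t^3 := by positivity
  field_simp at h
  nlinarith [sq_nonneg (2*t^3-1), mul_nonneg ht (sq_nonneg (2*t^3-1)), mul_nonneg ht ht,
    pow_nonneg ht 4, pow_nonneg ht 5, pow_nonneg ht 6]

lemma con124 (t : ℝ) (ht : 0 ≤ t)
    (h : (3:ℝ) - 1 - t =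
      (({1,2,4} : Multiset ℕ).map (fun j => 1/∑ i ∈ Finset.range (j+1), t^i)).sum) : False := by
  simp only [Multiset.insert_eq_cons, Multiset.map_cons, Multiset.map_singleton,
    Multiset.sum_cons, Multiset.sum_singleton, Finset.sum_range_succ, Finset.sum_range_zero,
    zero_add, pow_zero, pow_one] at h
  have hA : (0:ℝ) < 1 + t := by linarith
  have hB : (0:ℝ) < 1 + t + t^2 := by positivity
  have hC : (0:ℝ) < 1 + t + t^2 + t^3 + t^4 := by positivity
  field_simp at h
  have key : 0 < t^8+t^7-t^5-t^4-t^3+t+1 := by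
    rcases le_or_gt t 1 with h1 | h1
    · nlinarith [sq_nonneg (t^5+t^4+t^3-2), mul_nonneg (mul_nonneg ht ht) ht,
        pow_nonneg ht 6, mul_nonneg (pow_nonneg ht 4) (sq_nonneg (t-1)),
        mul_nonneg (mul_nonneg (pow_nonneg ht 3) (sub_nonneg.2 h1)) (sub_nonneg.2 h1)]
    · have h1 : (1:ℝ) ≤ t := h1.le
      have h3 : (1:ℝ) ≤ t^3 := one_le_pow₀ h1
      have h4 : (1:ℝ) ≤ t^4 := one_le_pow₀ h1
      have h5 : (1:ℝ) ≤ t^5 := one_le_pow₀ h1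
      nlinarith [mul_nonneg (by linarith : (0:ℝ) ≤ t^3 - 1)
        (by linarith : (0:ℝ) ≤ t^5 + t^4 - 1), ht]
  nlinarith [key]

lemma exists_sol (n : ℕ) (hn3 : 3 ≤ n) (k : Fin n → ℕ)
    (hsum : ∑ l : Fin n, 1/((k l : ℝ)+1) ≤ (n:ℝ) - 2) :
    ∃ t : ℝ, 0 ≤ t ∧ (n:ℝ)-1-t = ∑ l : Fin n, 1/∑ i ∈ Finset.range (k l + 1), t^i := by
  set G : ℝ → ℝ :=
    fun t => (∑ l : Fin n, 1/∑ i ∈ Finset.range (k l + 1), t^i) - ((n:ℝ)-1-t) with hG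
  have hn3' : (3:ℝ) ≤ (n:ℝ) := by exact_mod_cast hn3
  have hb : (1:ℝ) ≤ (n:ℝ) - 1 := by linarith
  have hcont : ContinuousOn G (Set.Icc 1 ((n:ℝ)-1)) := by
    apply ContinuousOn.sub ?_ (Continuous.continuousOn (by continuity))
    apply continuousOn_finset_sum
    intro l _
    apply ContinuousOn.div continuousOn_const
      (Continuous.continuousOn (continuous_finset_sum _ (fun i _ => continuous_pow i)))
    intro x hx
    exact ne_of_gt (S_pos x (le_trans zero_le_one hx.1) _)
  have hG1 : G 1 ≤ 0 := by
    have e : ∀ l : Fin n, ∑ i ∈ Finset.range (k l + 1), (1:ℝ)^i = (k l : ℝ)+1 := by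
      intro l; simp
    simp only [hG]
    rw [Finset.sum_congr rfl (fun l _ => by rw [e l])]
    linarith
  have hGb : 0 ≤ G ((n:ℝ)-1) := by
    simp only [hG]
    have : 0 ≤ ∑ l : Fin n, 1/∑ i ∈ Finset.range (k l + 1), ((n:ℝ)-1)^i := by
      apply Finset.sum_nonneg
      intro l _
      exact le_of_lt (one_div_pos.2 (S_pos _ (by linarith) _))
    linarith [this]
  obtain ⟨t, htI, htG⟩ := intermediate_value_Icc hb hcont ⟨hG1, hGb⟩
  refine ⟨t, le_trans zero_le_one htI.1, ?_⟩
  have : (∑ l : Fin n, 1/∑ i ∈ Finset.range (k l + 1), t^i) - ((n:ℝ)-1-t) = 0 := htG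
  linarith

lemma mswap1 (x y z : ℕ) : ({x,y,z} : Multiset ℕ) = {y,x,z} := by
  simp only [Multiset.insert_eq_cons]; exact Multiset.cons_swap x y _

lemma mswap2 (x y z : ℕ) : ({x,y,z} : Multiset ℕ) = {x,z,y} := by
  simp only [Multiset.insert_eq_cons]
  exact congrArg (Multiset.cons x) (Multiset.cons_swap y z _)

lemma pair56 (b c : ℕ) (hb : 1 ≤ b) (hc : 1 ≤ c) (h : ¬(b = 1 ∧ c = 1)) :
    1/((b:ℝ)+1) + 1/((c:ℝ)+1) ≤ 5/6 := by
  have hb1 : (2:ℝ) ≤ (b:ℝ)+1 := by exact_mod_cast Nat.succ_le_succ hb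
  have hc1 : (2:ℝ) ≤ (c:ℝ)+1 := by exact_mod_cast Nat.succ_le_succ hc
  rcases Nat.eq_or_lt_of_le hb with hb2 | hb2
  · have hc2 : 2 ≤ c := by omega
    have : (3:ℝ) ≤ (c:ℝ)+1 := by exact_mod_cast Nat.succ_le_succ hc2
    have h1 : 1/((b:ℝ)+1) ≤ 1/2 := by
      apply one_div_le_one_div_of_le <;> linarith
    have h2 : 1/((c:ℝ)+1) ≤ 1/3 := by
      apply one_div_le_one_div_of_le <;> linarith
    linarith
  · have : (3:ℝ) ≤ (b:ℝ)+1 := by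
      have : 2 ≤ b := by omega
      exact_mod_cast Nat.succ_le_succ this
    have h1 : 1/((b:ℝ)+1) ≤ 1/3 := by
      apply one_div_le_one_div_of_le <;> linarith
    have h2 : 1/((c:ℝ)+1) ≤ 1/2 := by
      apply one_div_le_one_div_of_le <;> linarith
    linarith

lemma big_le (a : ℕ) (ha : 5 ≤ a) : 1/((a:ℝ)+1) ≤ 1/6 := by
  have : (6:ℝ) ≤ (a:ℝ)+1 := by exact_mod_cast Nat.succ_le_succ ha
  apply one_div_le_one_div_of_le <;> linarith

lemma key3 (a b c : ℕ) (ha : 1 ≤ a) (hb : 1 ≤ b) (hc : 1 ≤ c)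
    (h : 1 < 1/((a:ℝ)+1) + 1/((b:ℝ)+1) + 1/((c:ℝ)+1)) :
    (∃ m : ℕ, 1 ≤ m ∧ ({a,b,c} : Multiset ℕ) = {1,1,m}) ∨
      ({a,b,c} : Multiset ℕ) = {1,2,2} ∨ ({a,b,c} : Multiset ℕ) = {1,2,3} ∨
      ({a,b,c} : Multiset ℕ) = {1,2,4} := by
  by_cases h11 : (a = 1 ∧ b = 1) ∨ (a = 1 ∧ c = 1) ∨ (b = 1 ∧ c = 1)
  · rcases h11 with ⟨rfl, rfl⟩ | ⟨rfl, rfl⟩ | ⟨rfl, rfl⟩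
    · exact Or.inl ⟨c, hc, rfl⟩
    · exact Or.inl ⟨b, hb, mswap2 1 b 1⟩
    · exact Or.inl ⟨a, ha, (mswap1 a 1 1).trans (mswap2 1 a 1)⟩
  · push_neg at h11
    have hab := h11.1
    have hac := h11.2.1
    have hbc := h11.2.2
    have ha4 : a ≤ 4 := by
      by_contra h5
      have := big_le a (by omega)
      have := pair56 b c hb hc (by tauto)
      linarith
    have hb4 : b ≤ 4 := by
      by_contra h5
      have := big_le b (by omega)
      have := pair56 a c ha hc (by tauto)
      linarith
    have hc4 : c ≤ 4 := by
      by_contra h5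
      have := big_le c (by omega)
      have := pair56 a b ha hb (by tauto)
      linarith
    interval_cases a <;> interval_cases b <;> interval_cases c <;>
      first
        | omega
        | (right; decide)
        | (exfalso; norm_num at h)

/-- The equation `n − 1 − t = Σ_{l=1}^n 1/(1 + t + ⋯ + t^{k_l})` has no
solution `t ∈ [0, ∞)` iff the star-shaped graph with branch lengths `k_1, …, k_n` is a
Dynkin graph, i.e. `n ≤ 2`, or `n = 3` with branch-length multiset `{1,1,m}` (`m ≥ 1`),
`{1,2,2}`, `{1,2,3}` or `{1,2,4}`. -/
theorem stmt_0 (n : ℕ) (hn : 1 ≤ n) (k : Fin n → ℕ) (hk : ∀ l, 1 ≤ k l) :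
    (¬ ∃ t : ℝ, 0 ≤ t ∧
        (n : ℝ) - 1 - t = ∑ l : Fin n, 1 / ∑ i ∈ Finset.range (k l + 1), t ^ i) ↔
      (n ≤ 2 ∨
        (n = 3 ∧
          ((∃ m : ℕ, 1 ≤ m ∧ Multiset.map k Finset.univ.val = {1, 1, m}) ∨
            Multiset.map k Finset.univ.val = {1, 2, 2} ∨
            Multiset.map k Finset.univ.val = {1, 2, 3} ∨
            Multiset.map k Finset.univ.val = {1, 2, 4}))) := by
  constructor
  · -- no solution → Dynkin
    intro hno
    by_contra hD
    push_neg at hD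
    obtain ⟨hn2, hn3⟩ := hD
    apply hno
    apply exists_sol n (by omega) k
    rcases eq_or_lt_of_le (show 3 ≤ n by omega) with h3 | h4
    · -- n = 3
      subst h3
      have hC := hn3 rfl
      have hrfl : Multiset.map k Finset.univ.val = {k 0, k 1, k 2} := rfl
      rw [hrfl] at hC
      by_contra hgt
      push_neg at hgt
      have hgt' : 1 < ∑ l : Fin 3, 1/((k l : ℝ)+1) := by
        have : ((3:ℕ):ℝ) - 2 = 1 := by norm_num
        linarith [hgt, this.symm ▸ hgt]
      rw [Fin.sum_univ_three] at hgt'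
      rcases key3 (k 0) (k 1) (k 2) (hk 0) (hk 1) (hk 2) hgt' with ⟨m, hm, hM⟩ | hM | hM | hM
      · exact hC.1 m hm hM
      · exact hC.2.1 hM
      · exact hC.2.2.1 hM
      · exact hC.2.2.2 hM
    · -- n ≥ 4
      have hn4 : (4:ℝ) ≤ (n:ℝ) := by exact_mod_cast h4
      calc ∑ l : Fin n, 1/((k l : ℝ)+1)
          ≤ ∑ _l : Fin n, (1/2 : ℝ) := by
            apply Finset.sum_le_sum
            intro l _
            have h2 : (2:ℝ) ≤ (k l : ℝ)+1 := by exact_mod_cast Nat.succ_le_succ (hk l)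
            apply one_div_le_one_div_of_le <;> linarith
        _ = (n:ℝ)/2 := by
            rw [Finset.sum_const, Finset.card_univ, Fintype.card_fin]
            push_cast; ring
        _ ≤ (n:ℝ) - 2 := by linarith
  · -- Dynkin → no solution
    rintro (hn2 | ⟨rfl, hcase⟩)
    · interval_cases n
      · rintro ⟨t, ht, heq⟩
        rw [Fin.sum_univ_one] at heq
        have hpos : 0 < 1/∑ i ∈ Finset.range (k 0 + 1), t^i :=
          one_div_pos.2 (S_pos t ht (k 0))
        linarith
      · rintro ⟨t, ht, heq⟩
        rw [Fin.sum_univ_two] at heq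
        push_cast at heq
        have h0 := S_pos t ht (k 0)
        have h1 := S_pos t ht (k 1)
        have p0 : 0 < 1/∑ i ∈ Finset.range (k 0 + 1), t^i := one_div_pos.2 h0
        have p1 : 0 < 1/∑ i ∈ Finset.range (k 1 + 1), t^i := one_div_pos.2 h1
        have i0 := S_inv_ge t ht (k 0)
        have i1 := S_inv_ge t ht (k 1)
        rcases le_or_gt 1 t with h | h
        · linarith
        · linarith
    · rintro ⟨t, ht, heq⟩
      have hrw : ∑ l : Fin 3, 1/∑ i ∈ Finset.range (k l + 1), t^i
          = ((Multiset.map k Finset.univ.val).map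
              (fun j => 1/∑ i ∈ Finset.range (j+1), t^i)).sum := by
        rw [Multiset.map_map]; rfl
      rw [hrw] at heq
      push_cast at heq
      rcases hcase with ⟨m, _hm, hM⟩ | hM | hM | hM
      · rw [hM] at heq; exact con11m t ht m heq
      · rw [hM] at heq; exact con122 t ht heq
      · rw [hM] at heq; exact con123 t ht heq
      · rw [hM] at heq; exact con124 t ht heq
end

section
/- Let n ≥ 1 and let k_1, …, k_n ≥ 1 be integers such that the star-shaped graph Γ with branch lengths k_1, …, k_n is neither a Dynkin graph nor an extended Dynkin graph (i.e. it is not the case that n ≤ 2, nor that n = 3 with branch-length multiset {1,1,m} (m ≥ 1), {1,2,2}, {1,2,3} or {1,2,4}, nor that n = 4 with all branch lengths 1, nor that n = 3 with branch-length multiset {2,2,2}, {1,3,3} or {1,2,5}). Then the equation n − 1 − t = Σ_{l=1}^n 1/(1 + t + ⋯ + t^{k_l}) has exactly two solutions t_1, t_2 in [0, ∞), and these satisfy 0 < t_1 < 1 < t_2 < n − 1. -/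
/-!
The equation reads `F t = n - 1` for `F t = t + ∑ l, 1 / S_{k_l}(t)`, `S_k(t) = 1 + t + ⋯ + t^k`.
Each `1 / S_k` is convex on `[0, ∞)`, because `2 S_k'² - S_k S_k'' = (k + 1) t^(k-1) Q_k(t)` with
`Q_k(t) = ∑_{j<k} (j + 1)(k - j) t^j`; hence `F` is convex. Now `F 0 = n > n - 1`,
`F (n - 1) > n - 1`, and `F 1 = 1 + ∑ l, 1 / (k_l + 1) < n - 1` precisely because the star is
neither Dynkin nor extended Dynkin. The intermediate value theorem gives a solution on each side
of `1`, and a convex function dipping below a level meets it at most once on each side of the dip.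
-/

open Finset Set

theorem ConvexOn.fun_sum {𝕜 E β ι : Type*} [Semiring 𝕜] [PartialOrder 𝕜] [AddCommMonoid E]
    [AddCommMonoid β] [PartialOrder β] [IsOrderedAddMonoid β] [SMul 𝕜 E] [Module 𝕜 β]
    {s : Set E} {t : Finset ι} {f : ι → E → β} (hs : Convex 𝕜 s)
    (hf : ∀ i ∈ t, ConvexOn 𝕜 s (f i)) : ConvexOn 𝕜 s fun x => ∑ i ∈ t, f i x := by
  induction t using Finset.cons_induction with
  | empty => simpa using convexOn_const 0 hs
  | cons i t _ ih =>
    simp only [sum_cons]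
    exact (hf i (mem_cons_self i t)).add (ih fun j hj => hf j (mem_cons_of_mem hj))

section Convex

variable {𝕜 β : Type*} [Field 𝕜] [LinearOrder 𝕜] [IsStrictOrderedRing 𝕜]
  [AddCommMonoid β] [LinearOrder β] [IsOrderedCancelAddMonoid β] [Module 𝕜 β]
  [PosSMulStrictMono 𝕜 β] {s : Set 𝕜} {f : 𝕜 → β} {p x y : 𝕜}

theorem ConvexOn.eq_of_apply_eq_of_lt_right (hf : ConvexOn 𝕜 s f) (hp : p ∈ s) (hx : x ∈ s)
    (hy : y ∈ s) (hpx : p < x) (hpy : p < y) (hfp : f p < f x) (hfxy : f x = f y) : x = y := by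
  rcases lt_trichotomy x y with hxy | hxy | hxy
  · exact absurd hfxy (hf.lt_right_of_left_lt hp hy (Ioo_subset_openSegment ⟨hpx, hxy⟩) hfp).ne
  · exact hxy
  · exact absurd hfxy.symm
      (hf.lt_right_of_left_lt hp hx (Ioo_subset_openSegment ⟨hpy, hxy⟩) (hfxy ▸ hfp)).ne

theorem ConvexOn.eq_of_apply_eq_of_lt_left (hf : ConvexOn 𝕜 s f) (hp : p ∈ s) (hx : x ∈ s)
    (hy : y ∈ s) (hxp : x < p) (hyp : y < p) (hfp : f p < f x) (hfxy : f x = f y) : x = y := by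
  rcases lt_trichotomy x y with hxy | hxy | hxy
  · exact absurd hfxy
      (hf.lt_left_of_right_lt hx hp (Ioo_subset_openSegment ⟨hxy, hyp⟩) (hfxy ▸ hfp)).ne'
  · exact hxy
  · exact absurd hfxy.symm
      (hf.lt_left_of_right_lt hy hp (Ioo_subset_openSegment ⟨hxy, hxp⟩) hfp).ne'

end Convex

theorem ConvexOn.exists_two_eq_of_lt {s : Set ℝ} {f : ℝ → ℝ} {a p b c : ℝ} (hf : ConvexOn ℝ s f)
    (hcont : ContinuousOn f (Icc a b)) (ha : a ∈ s) (hb : b ∈ s) (hap : a < p) (hpb : p < b)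
    (hfa : c < f a) (hfp : f p < c) (hfb : c < f b) :
    ∃ t₁ t₂, a < t₁ ∧ t₁ < p ∧ p < t₂ ∧ t₂ < b ∧ f t₁ = c ∧ f t₂ = c ∧
      ∀ t ∈ s, f t = c → t = t₁ ∨ t = t₂ := by
  have hmem : ∀ t ∈ Icc a b, t ∈ s := fun t ht => hf.1.ordConnected.out ha hb ht
  obtain ⟨t₁, ⟨hat₁, ht₁p⟩, hft₁⟩ :=
    intermediate_value_Ioo' hap.le (hcont.mono (Icc_subset_Icc_right hpb.le)) ⟨hfp, hfa⟩
  obtain ⟨t₂, ⟨hpt₂, ht₂b⟩, hft₂⟩ :=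
    intermediate_value_Ioo hpb.le (hcont.mono (Icc_subset_Icc_left hap.le)) ⟨hfp, hfb⟩
  refine ⟨t₁, t₂, hat₁, ht₁p, hpt₂, ht₂b, hft₁, hft₂, fun t ht hft => ?_⟩
  have hps : p ∈ s := hmem p ⟨hap.le, hpb.le⟩
  rcases lt_trichotomy t p with htp | rfl | hpt
  · exact .inl <| hf.eq_of_apply_eq_of_lt_left hps ht (hmem t₁ ⟨hat₁.le, (ht₁p.trans hpb).le⟩)
      htp ht₁p (hft ▸ hfp) (hft.trans hft₁.symm)
  · exact absurd hft hfp.ne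
  · exact .inr <| hf.eq_of_apply_eq_of_lt_right hps ht (hmem t₂ ⟨(hap.trans hpt₂).le, ht₂b.le⟩)
      hpt hpt₂ (hft ▸ hfp) (hft.trans hft₂.symm)

section Identities

variable {R : Type*} [CommRing R]

def geomSum (k : ℕ) (x : R) : R := ∑ i ∈ range (k + 1), x ^ i

def geomSumDeriv (k : ℕ) (x : R) : R := ∑ i ∈ range k, ((i : R) + 1) * x ^ i

def geomSumDeriv2 (k : ℕ) (x : R) : R := ∑ i ∈ range (k - 1), ((i : R) + 2) * ((i : R) + 1) * x ^ i

def weightedGeomSum (k : ℕ) (x : R) : R := ∑ j ∈ range k, ((j : R) + 1) * ((k : R) - j) * x ^ j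

theorem one_sub_mul_geomSumDeriv (k : ℕ) (x : R) :
    (1 - x) * geomSumDeriv k x = geomSum k x - ((k : R) + 1) * x ^ k := by
  induction k with
  | zero => simp [geomSumDeriv, geomSum]
  | succ k ih =>
    simp only [geomSumDeriv, geomSum] at ih ⊢
    rw [sum_range_succ, sum_range_succ _ (k + 1)]
    push_cast
    linear_combination ih

theorem one_sub_mul_geomSumDeriv2 (k : ℕ) (x : R) :
    (1 - x) * geomSumDeriv2 (k + 1) x =
      2 * geomSumDeriv (k + 1) x - ((k : R) + 1) * ((k : R) + 2) * x ^ k := by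
  induction k with
  | zero => simp [geomSumDeriv2, geomSumDeriv]
  | succ k ih =>
    simp only [geomSumDeriv2, geomSumDeriv, Nat.add_sub_cancel] at ih ⊢
    rw [sum_range_succ, sum_range_succ _ (k + 1)]
    push_cast
    linear_combination ih

theorem weightedGeomSum_succ (k : ℕ) (x : R) :
    weightedGeomSum (k + 1) x = weightedGeomSum k x + geomSumDeriv (k + 1) x := by
  simp only [weightedGeomSum, geomSumDeriv, sum_range_succ, Nat.cast_add, Nat.cast_one]
  rw [← add_assoc, ← sum_add_distrib]
  congr 1
  · exact sum_congr rfl fun j _ => by ring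
  · ring

theorem one_sub_mul_weightedGeomSum (k : ℕ) (x : R) :
    (1 - x) * weightedGeomSum k x = k * geomSum k x - 2 * x * geomSumDeriv k x := by
  induction k with
  | zero => simp [weightedGeomSum, geomSum, geomSumDeriv]
  | succ k ih =>
    rw [weightedGeomSum_succ]
    have hS : geomSum (k + 1) x = geomSum k x + x ^ (k + 1) := sum_range_succ _ _
    have hD : geomSumDeriv (k + 1) x = geomSumDeriv k x + ((k : R) + 1) * x ^ k :=
      sum_range_succ _ _
    rw [hS, hD]
    push_cast
    linear_combination ih + one_sub_mul_geomSumDeriv k x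

open Polynomial in
theorem two_mul_geomSumDeriv_sq_sub_geomSum_mul_geomSumDeriv2 (k : ℕ) (x : R) :
    2 * geomSumDeriv (k + 1) x ^ 2 - geomSum (k + 1) x * geomSumDeriv2 (k + 1) x =
      ((k : R) + 2) * x ^ k * weightedGeomSum (k + 1) x := by
  suffices h : 2 * geomSumDeriv (k + 1) (X : ℤ[X]) ^ 2 -
      geomSum (k + 1) X * geomSumDeriv2 (k + 1) X =
      ((k : ℤ[X]) + 2) * X ^ k * weightedGeomSum (k + 1) X by
    simpa [geomSum, geomSumDeriv, geomSumDeriv2, weightedGeomSum, map_ofNat] using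
      congrArg (aeval x) h
  -- After multiplication by `1 - X` every sum has a closed form, and `1 - X` cancels in `ℤ[X]`.
  have h1X : (1 : ℤ[X]) - X ≠ 0 := fun h => by simpa using congrArg (eval 0) h
  apply mul_left_cancel₀ h1X
  have hA := one_sub_mul_geomSumDeriv (k + 1) (X : ℤ[X])
  have hB := one_sub_mul_geomSumDeriv2 k (X : ℤ[X])
  have hC := one_sub_mul_weightedGeomSum (k + 1) (X : ℤ[X])
  push_cast at hA hC ⊢
  linear_combination (2 * geomSumDeriv (k + 1) (X : ℤ[X])) * hA - geomSum (k + 1) X * hB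
    - ((k + 2) * X ^ k) * hC

end Identities

theorem geomSum_pos (k : ℕ) {x : ℝ} (hx : 0 ≤ x) : 0 < geomSum k x := by
  rw [geomSum, sum_range_succ']
  positivity

theorem weightedGeomSum_nonneg (k : ℕ) {x : ℝ} (hx : 0 ≤ x) : 0 ≤ weightedGeomSum k x := by
  refine sum_nonneg fun j hj => mul_nonneg (mul_nonneg (by positivity) ?_) (pow_nonneg hx j)
  have : (j : ℝ) < k := by exact_mod_cast mem_range.mp hj
  linarith

theorem geomSum_mul_geomSumDeriv2_le (k : ℕ) {x : ℝ} (hx : 0 ≤ x) :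
    geomSum k x * geomSumDeriv2 k x ≤ 2 * geomSumDeriv k x ^ 2 := by
  cases k with
  | zero => simp [geomSumDeriv2, geomSumDeriv]
  | succ k =>
    have h := two_mul_geomSumDeriv_sq_sub_geomSum_mul_geomSumDeriv2 k x
    have : 0 ≤ ((k : ℝ) + 2) * x ^ k * weightedGeomSum (k + 1) x := by
      have := weightedGeomSum_nonneg (k + 1) hx
      positivity
    linarith

theorem hasDerivAt_geomSum (k : ℕ) (x : ℝ) : HasDerivAt (geomSum k) (geomSumDeriv k x) x := by
  have h := HasDerivAt.fun_sum (u := range (k + 1)) fun i _ => hasDerivAt_pow i x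
  have e : ∑ i ∈ range (k + 1), (i : ℝ) * x ^ (i - 1) = geomSumDeriv k x := by
    rw [sum_range_succ', geomSumDeriv]
    simp only [Nat.cast_zero, zero_mul, add_zero, Nat.add_sub_cancel, Nat.cast_succ]
  exact e ▸ h

theorem hasDerivAt_geomSumDeriv (k : ℕ) (x : ℝ) :
    HasDerivAt (geomSumDeriv k) (geomSumDeriv2 k x) x := by
  have h := HasDerivAt.fun_sum (u := range k) fun j _ =>
    (hasDerivAt_pow j x).const_mul ((j : ℝ) + 1)
  have e : ∑ j ∈ range k, ((j : ℝ) + 1) * (j * x ^ (j - 1)) = geomSumDeriv2 k x := by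
    cases k with
    | zero => simp [geomSumDeriv2]
    | succ k =>
      rw [sum_range_succ', geomSumDeriv2]
      simp only [Nat.cast_zero, zero_mul, mul_zero, add_zero, Nat.add_sub_cancel, Nat.cast_succ]
      exact sum_congr rfl fun j _ => by ring
  exact e ▸ h

theorem continuous_geomSum (k : ℕ) : Continuous (geomSum k : ℝ → ℝ) :=
  continuous_iff_continuousAt.2 fun x => (hasDerivAt_geomSum k x).continuousAt

theorem convexOn_inv_geomSum (k : ℕ) : ConvexOn ℝ (Ici 0) fun x : ℝ => (geomSum k x)⁻¹ := by
  have hS : ∀ x ∈ Ici (0 : ℝ), geomSum k x ≠ 0 := fun x hx => (geomSum_pos k hx).ne'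
  refine convexOn_of_hasDerivWithinAt2_nonneg (convex_Ici 0)
    (f' := fun x => -geomSumDeriv k x / geomSum k x ^ 2)
    (f'' := fun x => (-geomSumDeriv2 k x * geomSum k x ^ 2 -
      -geomSumDeriv k x * (2 * geomSum k x ^ 1 * geomSumDeriv k x)) / (geomSum k x ^ 2) ^ 2)
    ?_ (fun x hx => ((hasDerivAt_geomSum k x).inv (hS x (interior_subset hx))).hasDerivWithinAt)
    (fun x hx => ((hasDerivAt_geomSumDeriv k x).neg.div ((hasDerivAt_geomSum k x).pow 2)
      (pow_ne_zero 2 (hS x (interior_subset hx)))).hasDerivWithinAt) ?_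
  · exact (continuous_geomSum k).continuousOn.inv₀ hS
  · intro x hx
    rw [interior_Ici] at hx
    have hS := geomSum_pos k hx.le
    have h2 := geomSum_mul_geomSumDeriv2_le k hx.le
    apply div_nonneg _ (by positivity)
    nlinarith [mul_nonneg hS.le (sub_nonneg.2 h2)]

def IsDynkinBranchTriple (M : Multiset ℕ) : Prop :=
  (∃ m : ℕ, 1 ≤ m ∧ M = {1, 1, m}) ∨ M = {1, 2, 2} ∨ M = {1, 2, 3} ∨ M = {1, 2, 4}

def IsExtendedDynkinBranchTriple (M : Multiset ℕ) : Prop :=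
  M = {2, 2, 2} ∨ M = {1, 3, 3} ∨ M = {1, 2, 5}

theorem sum_three_inv_add_one_le {a b c a₀ b₀ c₀ : ℕ} (ha : a₀ ≤ a) (hb : b₀ ≤ b) (hc : c₀ ≤ c) :
    ((a : ℝ) + 1)⁻¹ + ((b : ℝ) + 1)⁻¹ + ((c : ℝ) + 1)⁻¹ ≤
      ((a₀ : ℝ) + 1)⁻¹ + ((b₀ : ℝ) + 1)⁻¹ + ((c₀ : ℝ) + 1)⁻¹ := by
  gcongr

theorem sum_three_inv_add_one_lt_one_of_le {a b c : ℕ} (ha : 1 ≤ a) (hab : a ≤ b) (hbc : b ≤ c)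
    (hD : ¬ IsDynkinBranchTriple {a, b, c}) (hE : ¬ IsExtendedDynkinBranchTriple {a, b, c}) :
    ((a : ℝ) + 1)⁻¹ + ((b : ℝ) + 1)⁻¹ + ((c : ℝ) + 1)⁻¹ < 1 := by
  have hb : 2 ≤ b := by
    by_contra! hb
    obtain ⟨rfl, rfl⟩ : a = 1 ∧ b = 1 := by omega
    exact hD (.inl ⟨c, hbc, rfl⟩)
  -- The minimal sorted triples outside both lists: (3,3,3), (2,2,3), (1,4,4), (1,3,4), (1,2,6).
  have hcases : 3 ≤ a ∨ (2 ≤ a ∧ 3 ≤ c) ∨ 4 ≤ b ∨ (3 ≤ b ∧ 4 ≤ c) ∨ 6 ≤ c := by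
    by_contra! h
    obtain ⟨h3a, h23, h4b, h34, h6c⟩ := h
    interval_cases a <;> interval_cases b <;> interval_cases c <;>
      first
      | omega
      | simp [IsDynkinBranchTriple, IsExtendedDynkinBranchTriple] at hD hE
  rcases hcases with h | ⟨h, h'⟩ | h | ⟨h, h'⟩ | h
  · exact (sum_three_inv_add_one_le (a₀ := 3) (b₀ := 3) (c₀ := 3) h (by omega) (by omega)).trans_lt
      (by norm_num)
  · exact (sum_three_inv_add_one_le (a₀ := 2) (b₀ := 2) (c₀ := 3) h (by omega) h').trans_lt
      (by norm_num)
  · exact (sum_three_inv_add_one_le (a₀ := 1) (b₀ := 4) (c₀ := 4) ha h (by omega)).trans_lt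
      (by norm_num)
  · exact (sum_three_inv_add_one_le (a₀ := 1) (b₀ := 3) (c₀ := 4) ha h h').trans_lt (by norm_num)
  · exact (sum_three_inv_add_one_le (a₀ := 1) (b₀ := 2) (c₀ := 6) ha hb h).trans_lt (by norm_num)

theorem sum_map_inv_add_one_lt_one {M : Multiset ℕ} (hM : M.card = 3) (hpos : ∀ a ∈ M, 1 ≤ a)
    (hD : ¬ IsDynkinBranchTriple M) (hE : ¬ IsExtendedDynkinBranchTriple M) :
    (M.map fun a : ℕ => ((a : ℝ) + 1)⁻¹).sum < 1 := by
  have hsort := M.sort_eq (· ≤ ·)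
  have hsorted := M.pairwise_sort (· ≤ ·)
  have hlen := M.length_sort (r := (· ≤ ·))
  rcases hl : M.sort (· ≤ ·) with _ | ⟨a, _ | ⟨b, _ | ⟨c, _ | ⟨d, l⟩⟩⟩⟩ <;>
    simp only [hl, List.length_cons, List.length_nil] at hlen <;> try omega
  rw [hl] at hsort hsorted
  subst hsort
  simp only [List.pairwise_cons, List.mem_cons, List.not_mem_nil] at hsorted
  have hsum : ((a : ℝ) + 1)⁻¹ + ((b : ℝ) + 1)⁻¹ + ((c : ℝ) + 1)⁻¹ < 1 :=
    sum_three_inv_add_one_lt_one_of_le (hpos a (by simp)) (hsorted.1 b (by simp))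
      (hsorted.2.1 c (by simp)) hD hE
  simpa [add_assoc] using hsum

theorem sum_inv_add_one_lt_sub_two {n : ℕ} (k : Fin n → ℕ) (hk : ∀ l, 1 ≤ k l) (hn : 3 ≤ n)
    (h3 : n = 3 → ¬ IsDynkinBranchTriple (Multiset.map k univ.val) ∧
      ¬ IsExtendedDynkinBranchTriple (Multiset.map k univ.val))
    (h4 : n = 4 → ∃ l, 2 ≤ k l) :
    ∑ l, ((k l : ℝ) + 1)⁻¹ < n - 2 := by
  have hhalf : ∀ l, ((k l : ℝ) + 1)⁻¹ ≤ 1 / 2 := fun l => by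
    have := hk l
    rw [one_div]; gcongr; exact_mod_cast (show 1 + 1 ≤ k l + 1 by omega)
  obtain rfl | rfl | h5 : n = 3 ∨ n = 4 ∨ 5 ≤ n := by omega
  · obtain ⟨hD, hE⟩ := h3 rfl
    have hpos : ∀ a ∈ Multiset.map k univ.val, 1 ≤ a := fun a ha => by
      obtain ⟨l, -, rfl⟩ := Multiset.mem_map.mp ha
      exact hk l
    have h := sum_map_inv_add_one_lt_one (by simp) hpos hD hE
    simp only [Multiset.map_map, Function.comp_def, sum_map_val] at h
    norm_num
    exact h
  · obtain ⟨l₀, hl₀⟩ := h4 rfl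
    calc ∑ l, ((k l : ℝ) + 1)⁻¹ < ∑ _l : Fin 4, (1 / 2 : ℝ) :=
          sum_lt_sum (fun l _ => hhalf l) ⟨l₀, mem_univ _, by
            rw [one_div]; gcongr; exact_mod_cast (show 2 + 1 ≤ k l₀ + 1 by omega)⟩
      _ = (4 : ℕ) - 2 := by norm_num
  · calc ∑ l, ((k l : ℝ) + 1)⁻¹ ≤ ∑ _l : Fin n, (1 / 2 : ℝ) := sum_le_sum fun l _ => hhalf l
      _ = n / 2 := by rw [sum_const, card_univ, Fintype.card_fin, nsmul_eq_mul]; ring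
      _ < n - 2 := by
        have : (5 : ℝ) ≤ n := by exact_mod_cast h5
        linarith

theorem stmt_2_general (n : ℕ) (k : Fin n → ℕ) (hk : ∀ l, 1 ≤ k l)
    (hnotDynkin : ¬ (n ≤ 2 ∨
      (n = 3 ∧
        ((∃ m : ℕ, 1 ≤ m ∧ Multiset.map k Finset.univ.val = {1, 1, m}) ∨
          Multiset.map k Finset.univ.val = {1, 2, 2} ∨
          Multiset.map k Finset.univ.val = {1, 2, 3} ∨
          Multiset.map k Finset.univ.val = {1, 2, 4}))))
    (hnotExtDynkin : ¬ ((n = 4 ∧ ∀ l, k l = 1) ∨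
      (n = 3 ∧
        (Multiset.map k Finset.univ.val = {2, 2, 2} ∨
          Multiset.map k Finset.univ.val = {1, 3, 3} ∨
          Multiset.map k Finset.univ.val = {1, 2, 5})))) :
    ∃ t₁ t₂ : ℝ,
      0 < t₁ ∧ t₁ < 1 ∧ 1 < t₂ ∧ t₂ < (n : ℝ) - 1 ∧
      ((n : ℝ) - 1 - t₁ = ∑ l : Fin n, 1 / ∑ i ∈ Finset.range (k l + 1), t₁ ^ i) ∧
      ((n : ℝ) - 1 - t₂ = ∑ l : Fin n, 1 / ∑ i ∈ Finset.range (k l + 1), t₂ ^ i) ∧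
      ∀ t : ℝ, 0 ≤ t →
        (n : ℝ) - 1 - t = (∑ l : Fin n, 1 / ∑ i ∈ Finset.range (k l + 1), t ^ i) →
        t = t₁ ∨ t = t₂ := by
  obtain ⟨hn2, hD3⟩ := not_or.mp hnotDynkin
  obtain ⟨hE4, hE3⟩ := not_or.mp hnotExtDynkin
  have hn : (3 : ℝ) ≤ n := by exact_mod_cast (by omega : 3 ≤ n)
  have hsum := sum_inv_add_one_lt_sub_two k hk (by omega)
    (fun h => ⟨fun hD => hD3 ⟨h, hD⟩, fun hE => hE3 ⟨h, hE⟩⟩)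
    (fun h => by
      by_contra! hlt
      exact hE4 ⟨h, fun l => by have := hk l; have := hlt l; omega⟩)
  set F : ℝ → ℝ := fun t => t + ∑ l, (geomSum (k l) t)⁻¹ with hF
  have hsol : ∀ t : ℝ, ((n : ℝ) - 1 - t = ∑ l, 1 / ∑ i ∈ range (k l + 1), t ^ i) ↔
      F t = n - 1 := by
    intro t
    change _ = ∑ l, 1 / geomSum (k l) t ↔ _
    simp only [hF, one_div]
    constructor <;> intro <;> linarith
  have hconv : ConvexOn ℝ (Ici 0) F :=
    (convexOn_id (convex_Ici 0)).add <|
      .fun_sum (convex_Ici 0) fun l _ => convexOn_inv_geomSum (k l)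
  have hcont : ContinuousOn F (Icc 0 (n - 1)) :=
    continuousOn_id.add <| continuousOn_finsetSum _ fun l _ =>
      (continuous_geomSum (k l)).continuousOn.inv₀ fun t ht => (geomSum_pos (k l) ht.1).ne'
  have hF0 : (n : ℝ) - 1 < F 0 := by simp [hF, geomSum]
  have hF1 : F 1 < n - 1 := by
    simp only [hF, geomSum, one_pow, sum_const, card_range, nsmul_eq_mul, Nat.cast_add,
      Nat.cast_one, mul_one]
    linarith
  have hFn : n - 1 < F (n - 1) := by
    have : Nonempty (Fin n) := ⟨⟨0, by omega⟩⟩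
    have := sum_pos (fun l _ => inv_pos.2 (geomSum_pos (k l) (x := n - 1) (by linarith)))
      univ_nonempty
    linarith
  obtain ⟨t₁, t₂, h0, h1, h2, h3, ht₁, ht₂, huniq⟩ := hconv.exists_two_eq_of_lt hcont
    (mem_Ici.2 le_rfl) (mem_Ici.2 (by linarith)) zero_lt_one (by linarith) hF0 hF1 hFn
  exact ⟨t₁, t₂, h0, h1, h2, h3, (hsol t₁).2 ht₁, (hsol t₂).2 ht₂,
    fun t ht h => huniq t ht ((hsol t).1 h)⟩

/-- If the star-shaped graph with branch lengths `k_1, …, k_n` is neither a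
Dynkin graph nor an extended Dynkin graph, then the equation
`n − 1 − t = Σ_{l=1}^n 1/(1 + t + ⋯ + t^{k_l})` has exactly two solutions `t₁, t₂` in
`[0, ∞)`, and these satisfy `0 < t₁ < 1 < t₂ < n − 1`. -/
theorem stmt_2 (n : ℕ) (hn : 1 ≤ n) (k : Fin n → ℕ) (hk : ∀ l, 1 ≤ k l)
    (hnotDynkin : ¬ (n ≤ 2 ∨
      (n = 3 ∧
        ((∃ m : ℕ, 1 ≤ m ∧ Multiset.map k Finset.univ.val = {1, 1, m}) ∨
          Multiset.map k Finset.univ.val = {1, 2, 2} ∨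
          Multiset.map k Finset.univ.val = {1, 2, 3} ∨
          Multiset.map k Finset.univ.val = {1, 2, 4}))))
    (hnotExtDynkin : ¬ ((n = 4 ∧ ∀ l, k l = 1) ∨
      (n = 3 ∧
        (Multiset.map k Finset.univ.val = {2, 2, 2} ∨
          Multiset.map k Finset.univ.val = {1, 3, 3} ∨
          Multiset.map k Finset.univ.val = {1, 2, 5})))) :
    ∃ t₁ t₂ : ℝ,
      0 < t₁ ∧ t₁ < 1 ∧ 1 < t₂ ∧ t₂ < (n : ℝ) - 1 ∧
      ((n : ℝ) - 1 - t₁ = ∑ l : Fin n, 1 / ∑ i ∈ Finset.range (k l + 1), t₁ ^ i) ∧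
      ((n : ℝ) - 1 - t₂ = ∑ l : Fin n, 1 / ∑ i ∈ Finset.range (k l + 1), t₂ ^ i) ∧
      ∀ t : ℝ, 0 ≤ t →
        (n : ℝ) - 1 - t = (∑ l : Fin n, 1 / ∑ i ∈ Finset.range (k l + 1), t ^ i) →
        t = t₁ ∨ t = t₂ :=
  stmt_2_general n k hk hnotDynkin hnotExtDynkin
end

section
/- Let n ≥ 1 and let k_1, …, k_n ≥ 1 be integers. If t > 0 is a solution of the equation n − 1 − t = Σ_{l=1}^n 1/(1 + t + ⋯ + t^{k_l}), then t^{-1} is also a solution of the same equation, i.e. n − 1 − t^{-1} = Σ_{l=1}^n 1/(1 + t^{-1} + ⋯ + t^{-k_l}). -/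
/-!
Reversing the geometric sum gives `∑_{i ≤ m} t⁻¹ ^ i = t⁻¹ ^ m * ∑_{i ≤ m} t ^ i`, and together with
`(t - 1) ∑_{i ≤ m} t ^ i = t ^ (m + 1) - 1` this yields the affine relation
`1 / ∑_{i ≤ m} t⁻¹ ^ i = (1 - t⁻¹) + t⁻¹ / ∑_{i ≤ m} t ^ i`. Summing it over the branches turns the
equation at `t` into the equation at `t⁻¹`.
-/

open Finset

section Field

variable {K : Type*} [Field K] {t : K}

theorem geom_sum_inv_mul_pow (ht : t ≠ 0) (m : ℕ) :
    (∑ i ∈ range (m + 1), t⁻¹ ^ i) * t ^ m = ∑ i ∈ range (m + 1), t ^ i := by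
  rw [sum_mul, ← sum_range_reflect (t ^ ·) (m + 1)]
  refine sum_congr rfl fun i hi => ?_
  have him : i ≤ m := Nat.lt_succ_iff.mp (mem_range.mp hi)
  rw [inv_pow, inv_mul_eq_iff_eq_mul₀ (pow_ne_zero i ht), ← pow_add, add_tsub_cancel_right,
    Nat.add_sub_cancel' him]

theorem one_div_geom_sum_inv (ht : t ≠ 0) {m : ℕ} (hS : ∑ i ∈ range (m + 1), t ^ i ≠ 0) :
    1 / ∑ i ∈ range (m + 1), t⁻¹ ^ i = (1 - t⁻¹) + t⁻¹ * (1 / ∑ i ∈ range (m + 1), t ^ i) := by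
  rw [← mul_div_cancel_right₀ (∑ i ∈ range (m + 1), t⁻¹ ^ i) (pow_ne_zero m ht),
    geom_sum_inv_mul_pow ht, one_div_div]
  field_simp
  linear_combination -geom_sum_mul t (m + 1)

theorem sum_one_div_geom_sum_inv {ι : Type*} (s : Finset ι) (k : ι → ℕ) (ht : t ≠ 0)
    (hS : ∀ l ∈ s, ∑ i ∈ range (k l + 1), t ^ i ≠ 0) :
    ∑ l ∈ s, 1 / ∑ i ∈ range (k l + 1), t⁻¹ ^ i
      = #s * (1 - t⁻¹) + t⁻¹ * ∑ l ∈ s, 1 / ∑ i ∈ range (k l + 1), t ^ i := by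
  rw [sum_congr rfl fun l hl => one_div_geom_sum_inv ht (hS l hl), sum_add_distrib, sum_const,
    nsmul_eq_mul, mul_sum]

end Field

theorem stmt_3_general (n : ℕ) (k : Fin n → ℕ)
    (t : ℝ) (ht : 0 < t)
    (heq : (n : ℝ) - 1 - t = ∑ l : Fin n, 1 / ∑ i ∈ Finset.range (k l + 1), t ^ i) :
    (n : ℝ) - 1 - t⁻¹ = ∑ l : Fin n, 1 / ∑ i ∈ Finset.range (k l + 1), (t⁻¹) ^ i := by
  have hS : ∀ l ∈ univ, ∑ i ∈ range (k l + 1), t ^ i ≠ 0 := fun l _ =>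
    (sum_pos (fun i _ => pow_pos ht i) nonempty_range_add_one).ne'
  rw [sum_one_div_geom_sum_inv univ k ht.ne' hS, ← heq, card_univ, Fintype.card_fin]
  field_simp
  ring

/-- If `t > 0` is a solution of `n − 1 − t = Σ_{l=1}^n 1/(1 + t + ⋯ + t^{k_l})`,
then so is `t⁻¹`. -/
theorem stmt_3 (n : ℕ) (hn : 1 ≤ n) (k : Fin n → ℕ) (hk : ∀ l, 1 ≤ k l)
    (t : ℝ) (ht : 0 < t)
    (heq : (n : ℝ) - 1 - t = ∑ l : Fin n, 1 / ∑ i ∈ Finset.range (k l + 1), t ^ i) :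
    (n : ℝ) - 1 - t⁻¹ = ∑ l : Fin n, 1 / ∑ i ∈ Finset.range (k l + 1), (t⁻¹) ^ i :=
  stmt_3_general n k t ht heq
end

section
/- Let n ≥ 1 and let k_1, …, k_n ≥ 1 be integers, and let t > 0 satisfy n − 1 − t = Σ_{l=1}^n 1/(1 + t + ⋯ + t^{k_l}). Let χ_Γ be the special character with components α_j^{(l)} = S_{j−1}(t)/S_{k_l}(t) (1 ≤ j ≤ k_l, 1 ≤ l ≤ n) and root value λ = 1. Define the transformations S and T on characters χ = (α_1^{(1)}, …, α_{k_1}^{(1)}; …; α_1^{(n)}, …, α_{k_n}^{(n)}; λ) by: (Sχ)_j^{(l)} = α_{k_l}^{(l)} − α_{k_l − j}^{(l)} for 1 ≤ j ≤ k_l (with the convention α_0^{(l)} = 0) and root value λ' = Σ_{l=1}^n α_{k_l}^{(l)} − λ; and (Tχ)_j^{(l)} = λ − α_{k_l + 1 − j}^{(l)} for 1 ≤ j ≤ k_l with root value unchanged. Then T(S(χ_Γ)) = t^{-1} · χ_Γ, i.e. every component (including the root value) of T(S(χ_Γ)) equals t^{-1} times the corresponding component of χ_Γ. -/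
/-!
Everything follows from the recursion `S_m(t) = 1 + t S_{m-1}(t)`. It gives
`α_k = S_{k-1} / S_k = t⁻¹ (1 - 1 / S_k)` for the last component of each branch; summing over the
branches and using the associated equation yields the root value `t⁻¹` of `S χ_Γ`, and then
`t⁻¹ - (α_k - α_{j-1}) = t⁻¹ (1 + t S_{j-2}) / S_k = t⁻¹ α_j` for the other components.
-/

open Finset

section GeomSum

variable {K : Type*} [Field K] {x : K}

lemma geom_sum_div_geom_sum_succ (hx : x ≠ 0) {m : ℕ} (hS : ∑ i ∈ range (m + 1), x ^ i ≠ 0) :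
    (∑ i ∈ range m, x ^ i) / ∑ i ∈ range (m + 1), x ^ i
      = x⁻¹ * (1 - 1 / ∑ i ∈ range (m + 1), x ^ i) := by
  field_simp
  rw [geom_sum_succ]
  ring

lemma inv_sub_geom_sum_div_sub (hx : x ≠ 0) {k : ℕ} (hS : ∑ i ∈ range (k + 1), x ^ i ≠ 0)
    (m : ℕ) :
    x⁻¹ - ((∑ i ∈ range k, x ^ i) / ∑ i ∈ range (k + 1), x ^ i
        - (∑ i ∈ range m, x ^ i) / ∑ i ∈ range (k + 1), x ^ i)
      = x⁻¹ * ((∑ i ∈ range (m + 1), x ^ i) / ∑ i ∈ range (k + 1), x ^ i) := by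
  rw [geom_sum_div_geom_sum_succ hx hS, geom_sum_succ (n := m)]
  field_simp
  ring

lemma sum_geom_sum_div_sub_one {ι : Type*} [Fintype ι] (k : ι → ℕ) (hx : x ≠ 0)
    (hS : ∀ l, ∑ i ∈ range (k l + 1), x ^ i ≠ 0)
    (heq : (Fintype.card ι : K) - 1 - x = ∑ l, 1 / ∑ i ∈ range (k l + 1), x ^ i) :
    ∑ l, (∑ i ∈ range (k l), x ^ i) / ∑ i ∈ range (k l + 1), x ^ i - 1 = x⁻¹ := by
  simp only [geom_sum_div_geom_sum_succ hx (hS _), ← mul_sum, sum_sub_distrib, ← heq,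
    sum_const, card_univ, nsmul_eq_mul, mul_one]
  field_simp
  ring

end GeomSum

theorem stmt_6_general (n : ℕ) (k : Fin n → ℕ)
    (t : ℝ) (ht : 0 < t)
    (heq : (n : ℝ) - 1 - t = ∑ l : Fin n, 1 / ∑ i ∈ Finset.range (k l + 1), t ^ i)
    (α : Fin n → ℕ → ℝ)
    (hα : ∀ l j, α l j =
      (∑ i ∈ Finset.range j, t ^ i) / ∑ i ∈ Finset.range (k l + 1), t ^ i)
    (α' : Fin n → ℕ → ℝ)
    (hα' : ∀ l j, 1 ≤ j → j ≤ k l → α' l j = α l (k l) - α l (k l - j))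
    (lam' : ℝ) (hlam' : lam' = (∑ l : Fin n, α l (k l)) - 1)
    (α'' : Fin n → ℕ → ℝ)
    (hα'' : ∀ l j, 1 ≤ j → j ≤ k l → α'' l j = lam' - α' l (k l + 1 - j)) :
    (∀ l j, 1 ≤ j → j ≤ k l → α'' l j = t⁻¹ * α l j) ∧ lam' = t⁻¹ * 1 := by
  have hS : ∀ l, ∑ i ∈ range (k l + 1), t ^ i ≠ 0 :=
    fun l ↦ (geom_sum_pos ht.le (Nat.succ_ne_zero _)).ne'
  have hlam : lam' = t⁻¹ := by
    rw [hlam', ← sum_geom_sum_div_sub_one k ht.ne' hS (by simpa using heq)]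
    simp only [hα]
  refine ⟨fun l j hj hjk ↦ ?_, by rw [hlam, mul_one]⟩
  obtain ⟨m, rfl⟩ : ∃ m, j = m + 1 := ⟨j - 1, by omega⟩
  have hk : k l - (k l + 1 - (m + 1)) = m := by omega
  rw [hα'' l _ hj hjk, hα' l _ (by omega) (by omega), hk, hlam, hα, hα, hα,
    inv_sub_geom_sum_div_sub ht.ne' (hS l)]

/-- For the special character `χ_Γ` (components `α_j^{(l)} = S_{j−1}(t)/S_{k_l}(t)`,
root value `λ = 1`, where `t > 0` solves the equation associated to the graph), the composition
of the Coxeter functors' actions on characters satisfies `T(S(χ_Γ)) = t⁻¹ · χ_Γ`.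
Here `α : Fin n → ℕ → ℝ` encodes the components of `χ_Γ` (with the convention `α l 0 = 0`),
`α'` and `lam'` encode the components and root value of `S χ_Γ`, and `α''` encodes the
non-root components of `T (S χ_Γ)` (whose root value is again `lam'`). -/
theorem stmt_6 (n : ℕ) (hn : 1 ≤ n) (k : Fin n → ℕ) (hk : ∀ l, 1 ≤ k l)
    (t : ℝ) (ht : 0 < t)
    (heq : (n : ℝ) - 1 - t = ∑ l : Fin n, 1 / ∑ i ∈ Finset.range (k l + 1), t ^ i)
    (α : Fin n → ℕ → ℝ)
    (hα : ∀ l j, α l j =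
      (∑ i ∈ Finset.range j, t ^ i) / ∑ i ∈ Finset.range (k l + 1), t ^ i)
    (α' : Fin n → ℕ → ℝ)
    (hα' : ∀ l j, 1 ≤ j → j ≤ k l → α' l j = α l (k l) - α l (k l - j))
    (lam' : ℝ) (hlam' : lam' = (∑ l : Fin n, α l (k l)) - 1)
    (α'' : Fin n → ℕ → ℝ)
    (hα'' : ∀ l j, 1 ≤ j → j ≤ k l → α'' l j = lam' - α' l (k l + 1 - j)) :
    (∀ l j, 1 ≤ j → j ≤ k l → α'' l j = t⁻¹ * α l j) ∧ lam' = t⁻¹ * 1 :=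
  stmt_6_general n k t ht heq α hα α' hα' lam' hlam' α'' hα''
end

section
/- Let n ≥ 1 and let k_1, …, k_n ≥ 1 be integers, and let t > 0 satisfy n − 1 − t = Σ_{l=1}^n 1/(1 + t + ⋯ + t^{k_l}). Let χ_Γ be the special character with components α_j^{(l)} = S_{j−1}(t)/S_{k_l}(t) and root value λ = 1. Then the quadratic form γ_Γ(χ) = Σ_{l=1}^n Σ_{j=1}^{k_l} (α_j^{(l)})^2 + λ^2 − Σ_{l=1}^n Σ_{j=1}^{k_l − 1} α_j^{(l)} α_{j+1}^{(l)} − λ Σ_{l=1}^n α_{k_l}^{(l)} vanishes on χ_Γ: γ_Γ(χ_Γ) = 0. -/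
open Finset

lemma branch_lemma (t : ℝ) : ∀ KK : ℕ, 1 ≤ KK →
    2 * ((∑ j ∈ Icc 1 KK, (∑ i ∈ range j, t ^ i) ^ 2)
      - (∑ j ∈ Icc 1 (KK - 1), (∑ i ∈ range j, t ^ i) * (∑ i ∈ range (j + 1), t ^ i))
      - (∑ i ∈ range KK, t ^ i) * (∑ i ∈ range (KK + 1), t ^ i))
    = (∑ i ∈ range (KK + 1), (t ^ 2) ^ i) - (∑ i ∈ range (KK + 1), t ^ i) ^ 2 := by
  intro KK
  induction KK with
  | zero => omega
  | succ m ih =>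
    intro _
    rcases Nat.eq_zero_or_pos m with rfl | hm
    · norm_num [Finset.sum_range_succ]
      ring
    · have ih' := ih hm
      obtain ⟨p, rfl⟩ : ∃ p, m = p + 1 := ⟨m - 1, by omega⟩
      rw [Finset.sum_Icc_succ_top (by omega : 1 ≤ p + 1 + 1)]
      have h1 : p + 1 + 1 - 1 = p + 1 := by omega
      rw [h1, Finset.sum_Icc_succ_top (by omega : 1 ≤ p + 1),
        Finset.sum_Icc_succ_top (by omega : 1 ≤ p + 1)]
      have h2 : p + 1 - 1 = p := by omega
      rw [h2] at ih'
      rw [Finset.sum_Icc_succ_top (by omega : 1 ≤ p + 1)] at ih'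
      simp only [Finset.sum_range_succ] at ih' ⊢
      linear_combination ih'

lemma lemma2' (t : ℝ) (m : ℕ) :
    (t + 1) * (∑ i ∈ range m, (t ^ 2) ^ i)
      = (t - 1) * (∑ i ∈ range m, t ^ i) ^ 2 + 2 * (∑ i ∈ range m, t ^ i) := by
  induction m with
  | zero => simp
  | succ p ih =>
    have h := geom_sum_mul t p
    simp only [Finset.sum_range_succ]
    linear_combination ih - 2 * t ^ p * h

lemma perbranch (t : ℝ) (ht : 0 < t) (K : ℕ) (hK : 1 ≤ K) :
    (∑ j ∈ Icc 1 K, ((∑ i ∈ range j, t ^ i) / (∑ i ∈ range (K + 1), t ^ i)) ^ 2)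
      - (∑ j ∈ Icc 1 (K - 1), ((∑ i ∈ range j, t ^ i) / (∑ i ∈ range (K + 1), t ^ i))
          * ((∑ i ∈ range (j + 1), t ^ i) / (∑ i ∈ range (K + 1), t ^ i)))
      - (∑ i ∈ range K, t ^ i) / (∑ i ∈ range (K + 1), t ^ i)
    = 1 / ((t + 1) * (∑ i ∈ range (K + 1), t ^ i)) - 1 / (t + 1) := by
  have hQ : (0:ℝ) < ∑ i ∈ range (K + 1), t ^ i :=
    Finset.sum_pos (fun i _ => pow_pos ht i) (by simp)
  have htp : (0:ℝ) < t + 1 := by linarith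
  have h1 := branch_lemma t K hK
  have h2 := lemma2' t (K + 1)
  set Q : ℝ := ∑ i ∈ range (K + 1), t ^ i with hQdef
  set A : ℝ := ∑ j ∈ Icc 1 K, (∑ i ∈ range j, t ^ i) ^ 2 with hA
  set B : ℝ := ∑ j ∈ Icc 1 (K - 1), (∑ i ∈ range j, t ^ i) * (∑ i ∈ range (j + 1), t ^ i) with hB
  set C : ℝ := ∑ i ∈ range K, t ^ i with hC
  have hQ' : Q ≠ 0 := ne_of_gt hQ
  have htp' : t + 1 ≠ 0 := ne_of_gt htp
  have key : (t + 1) * (A - B - C * Q) = Q - Q ^ 2 := by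
    linear_combination ((t + 1) * h1 + h2) / 2
  simp only [div_pow, div_mul_div_comm, ← Finset.sum_div, ← hA, ← hB, ← hC]
  calc A / Q ^ 2 - B / (Q * Q) - C / Q
      = (t + 1) * (A - B - C * Q) / ((t + 1) * Q ^ 2) := by field_simp
    _ = (Q - Q ^ 2) / ((t + 1) * Q ^ 2) := by rw [key]
    _ = 1 / ((t + 1) * Q) - 1 / (t + 1) := by field_simp

/-- The quadratic form
`γ_Γ(χ) = Σ_l Σ_{j=1}^{k_l} (α_j^{(l)})² + λ² − Σ_l Σ_{j=1}^{k_l−1} α_j^{(l)} α_{j+1}^{(l)}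
− λ Σ_l α_{k_l}^{(l)}` vanishes on the special character `χ_Γ` (components
`α_j^{(l)} = S_{j−1}(t)/S_{k_l}(t)`, root value `λ = 1`, where `t > 0` solves the equation
associated to the graph). -/
theorem stmt_7 (n : ℕ) (hn : 1 ≤ n) (k : Fin n → ℕ) (hk : ∀ l, 1 ≤ k l)
    (t : ℝ) (ht : 0 < t)
    (heq : (n : ℝ) - 1 - t = ∑ l : Fin n, 1 / ∑ i ∈ Finset.range (k l + 1), t ^ i)
    (α : Fin n → ℕ → ℝ)
    (hα : ∀ l j, α l j =
      (∑ i ∈ Finset.range j, t ^ i) / ∑ i ∈ Finset.range (k l + 1), t ^ i) :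
    (∑ l : Fin n, ∑ j ∈ Finset.Icc 1 (k l), (α l j) ^ 2) + 1 ^ 2
      - (∑ l : Fin n, ∑ j ∈ Finset.Icc 1 (k l - 1), α l j * α l (j + 1))
      - 1 * ∑ l : Fin n, α l (k l) = 0 := by
  have htp : (0:ℝ) < t + 1 := by linarith
  have htp' : t + 1 ≠ 0 := ne_of_gt htp
  have hE : ∀ l : Fin n,
      (∑ j ∈ Finset.Icc 1 (k l), (α l j) ^ 2)
        - (∑ j ∈ Finset.Icc 1 (k l - 1), α l j * α l (j + 1)) - α l (k l)
      = 1 / ((t + 1) * (∑ i ∈ Finset.range (k l + 1), t ^ i)) - 1 / (t + 1) := by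
    intro l
    simp only [hα]
    exact perbranch t ht (k l) (hk l)
  have hsum : ∑ l : Fin n,
      ((∑ j ∈ Finset.Icc 1 (k l), (α l j) ^ 2)
        - (∑ j ∈ Finset.Icc 1 (k l - 1), α l j * α l (j + 1)) - α l (k l))
      = ∑ l : Fin n,
        (1 / ((t + 1) * (∑ i ∈ Finset.range (k l + 1), t ^ i)) - 1 / (t + 1)) :=
    Finset.sum_congr rfl fun l _ => hE l
  rw [Finset.sum_sub_distrib, Finset.sum_sub_distrib, Finset.sum_sub_distrib] at hsum
  have hrw : ∑ l : Fin n, 1 / ((t + 1) * (∑ i ∈ Finset.range (k l + 1), t ^ i))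
      = (1 / (t + 1)) * ∑ l : Fin n, 1 / (∑ i ∈ Finset.range (k l + 1), t ^ i) := by
    rw [Finset.mul_sum]
    refine Finset.sum_congr rfl fun l _ => ?_
    field_simp
  rw [hrw, ← heq, Finset.sum_const, Finset.card_univ, Fintype.card_fin, nsmul_eq_mul] at hsum
  have hval : (1 / (t + 1)) * ((n:ℝ) - 1 - t) - (n:ℝ) * (1 / (t + 1)) = -1 := by
    field_simp
    ring
  rw [hval] at hsum
  linarith
end

section
/- Let t > 0 be real and k ≥ 1 an integer. Define real numbers x_0, x_1, …, x_k by x_0 = 0 and, for 1 ≤ m ≤ k: x_m = t^{(k−m)/2} · S_{m−1}(t)/S_k(t) if k − m is even, and x_m = t^{(k−m+1)/2} · S_m(t)/S_k(t) if k − m is odd (equivalently, x_{k−2j} = t^j S_{k−2j−1}(t)/S_k(t) and x_{k−2j+1} = t^j S_{k−2j}(t)/S_k(t) for all admissible j ≥ 0). Then for every m with 1 ≤ m ≤ k − 1 one has x_{m−1} + x_{m+1} − x_m = t · x_m when k − m is even, and x_{m−1} + x_{m+1} − x_m = t^{-1} · x_m when k − m is odd; moreover x_{k−1} + 1 − x_k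 = t · x_k. -/
/-- For `t > 0` and `k ≥ 1`, define `x_0 = 0` and, along a branch of length
`k`, `x_{k−2j} = t^j S_{k−2j−1}(t)/S_k(t)` and `x_{k−2j+1} = t^j S_{k−2j}(t)/S_k(t)` for all
admissible `j` (where `S_m(t) = 1 + t + ⋯ + t^m`, so `S_{m-1}(t) = ∑_{i<m} t^i`). Then for
`1 ≤ m ≤ k−1` the reflected value `x_{m−1} + x_{m+1} − x_m` equals `t·x_m` if `k − m` is
even and `t⁻¹·x_m` if `k − m` is odd; moreover `x_{k−1} + 1 − x_k = t·x_k`. -/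
theorem stmt_9 (t : ℝ) (ht : 0 < t) (k : ℕ) (hk : 1 ≤ k)
    (x : ℕ → ℝ) (hx0 : x 0 = 0)
    (hxeven : ∀ j : ℕ, 1 ≤ k - 2 * j →
      x (k - 2 * j) =
        t ^ j * (∑ i ∈ Finset.range (k - 2 * j), t ^ i) / ∑ i ∈ Finset.range (k + 1), t ^ i)
    (hxodd : ∀ j : ℕ, 1 ≤ j → 2 * j ≤ k →
      x (k - 2 * j + 1) =
        t ^ j * (∑ i ∈ Finset.range (k - 2 * j + 1), t ^ i) /
          ∑ i ∈ Finset.range (k + 1), t ^ i) :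
    (∀ m : ℕ, 1 ≤ m → m < k →
      (Even (k - m) → x (m - 1) + x (m + 1) - x m = t * x m) ∧
      (¬ Even (k - m) → x (m - 1) + x (m + 1) - x m = t⁻¹ * x m)) ∧
    x (k - 1) + 1 - x k = t * x k := by
  have hS : (0:ℝ) < ∑ i ∈ Finset.range (k + 1), t ^ i :=
    Finset.sum_pos (fun i _ => pow_pos ht i) ⟨0, by simp⟩
  set S := ∑ i ∈ Finset.range (k + 1), t ^ i with hSdef
  have hS0 : S ≠ 0 := ne_of_gt hS
  have ht0 : t ≠ 0 := ne_of_gt ht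
  constructor
  · intro m hm1 hmk
    constructor
    · intro heven
      obtain ⟨j, hj⟩ := heven
      have hj1 : 1 ≤ j := by omega
      have hxm : x m = t ^ j * (∑ i ∈ Finset.range m, t ^ i) / S := by
        have h1 : k - 2*j = m := by omega
        have := hxeven j (by omega)
        rwa [h1] at this
      have hxm1 : x (m+1) = t ^ j * (∑ i ∈ Finset.range (m+1), t ^ i) / S := by
        have h1 : k - 2*j + 1 = m + 1 := by omega
        have := hxodd j hj1 (by omega)
        rwa [h1] at this
      have hxmm : x (m-1) = t ^ (j+1) * (∑ i ∈ Finset.range (m-1), t ^ i) / S := by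
        rcases Nat.eq_or_lt_of_le hm1 with h | h
        · have hm0 : m - 1 = 0 := by omega
          rw [hm0, hx0]
          simp
        · have h1 : k - 2*(j+1) + 1 = m - 1 := by omega
          have := hxodd (j+1) (by omega) (by omega)
          rwa [h1] at this
      rw [hxm, hxm1, hxmm]
      obtain ⟨n, rfl⟩ : ∃ n, m = n + 1 := ⟨m-1, by omega⟩
      simp only [Nat.add_sub_cancel, geom_sum_succ]
      field_simp
      ring
    · intro hodd
      obtain ⟨j, hj⟩ := Nat.odd_iff.mpr (Nat.not_even_iff.mp hodd)
      have hxm : x m = t ^ (j+1) * (∑ i ∈ Finset.range m, t ^ i) / S := by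
        have h1 : k - 2*(j+1) + 1 = m := by omega
        have := hxodd (j+1) (by omega) (by omega)
        rwa [h1] at this
      have hxm1 : x (m+1) = t ^ j * (∑ i ∈ Finset.range (m+1), t ^ i) / S := by
        have h1 : k - 2*j = m + 1 := by omega
        have := hxeven j (by omega)
        rwa [h1] at this
      have hxmm : x (m-1) = t ^ (j+1) * (∑ i ∈ Finset.range (m-1), t ^ i) / S := by
        rcases Nat.eq_or_lt_of_le hm1 with h | h
        · have hm0 : m - 1 = 0 := by omega
          rw [hm0, hx0]
          simp
        · have h1 : k - 2*(j+1) = m - 1 := by omega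
          have := hxeven (j+1) (by omega)
          rwa [h1] at this
      rw [hxm, hxm1, hxmm]
      obtain ⟨n, rfl⟩ : ∃ n, m = n + 1 := ⟨m-1, by omega⟩
      simp only [Nat.add_sub_cancel, geom_sum_succ]
      field_simp
      ring
  · have hxk : x k = (∑ i ∈ Finset.range k, t ^ i) / S := by
      have := hxeven 0 (by omega)
      simpa using this
    have hxk1 : x (k-1) = t * (∑ i ∈ Finset.range (k-1), t ^ i) / S := by
      rcases Nat.eq_or_lt_of_le hk with h | h
      · have h0 : k - 1 = 0 := by omega
        rw [h0, hx0]
        simp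
      · have h1 : k - 2*1 + 1 = k - 1 := by omega
        have := hxodd 1 le_rfl (by omega)
        rwa [h1, pow_one] at this
    rw [hxk, hxk1]
    obtain ⟨n, rfl⟩ : ∃ n, k = n + 1 := ⟨k-1, by omega⟩
    simp only [Nat.add_sub_cancel]
    have hC : (∑ i ∈ Finset.range (n+1), t ^ i) = t * ∑ i ∈ Finset.range n, t ^ i + 1 :=
      geom_sum_succ
    have hSeq : S = t * (∑ i ∈ Finset.range (n+1), t ^ i) + 1 := hSdef.trans geom_sum_succ
    field_simp
    rw [hSeq, hC]
    ring
end

section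
/- Let t > 0 be a real number with t ≠ 1, and let A and B be the linear endomorphisms of ℝ² determined by A(1,0) = (−1, 0), A(0,1) = (1 + t^{-1}, 1), B(1,0) = (1, 1 + t), B(0,1) = (0, −1). Then for every integer j ≥ 0: (A∘B)^j (1,0) = (1/(t^j(1−t))) · (1 − t^{2j+1}, t(1 − t^{2j})); B∘(A∘B)^j (1,0) = (1/(t^j(1−t))) · (1 − t^{2j+1}, 1 − t^{2j+2}); (B∘A)^j (0,1) = (1/(t^j(1−t))) · (1 − t^{2j}, 1 − t^{2j+1}); and A∘(B∘A)^j (0,1) = (1/(t^{j+1}(1−t))) · (1 − t^{2j+2}, t(1 − t^{2j+1})). -/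
/-!
The four sequences are the two interleaved orbits `u̇, c̊ u̇, ċ c̊ u̇, …` and `ů, ċ ů, c̊ ċ ů, …`.
Each closed form is a scalar `1 / (t ^ j * (1 - t))` times a vector whose entries are of the form
`1 - t ^ n` (up to a factor `t`), and one application of `ċ` or `c̊` turns the closed form of one
term into that of the next by an identity of rational functions in `t`. Induction on `j` then only
has to start from `u̇ = (1, 0)` and `ů = (0, 1)`.
-/

theorem LinearMap.ext_prod_ring {R M : Type*} [Semiring R] [AddCommMonoid M] [Module R M]
    {f g : R × R →ₗ[R] M} (h₁ : f (1, 0) = g (1, 0)) (h₂ : f (0, 1) = g (0, 1)) : f = g :=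
  LinearMap.prod_ext (LinearMap.ext_ring h₁) (LinearMap.ext_ring h₂)

noncomputable section

namespace StarShaped

open LinearMap

variable (t : ℝ)

/-- `ċ`, in the basis `(u̇, ů)`. -/
def cOdd : ℝ × ℝ →ₗ[ℝ] ℝ × ℝ :=
  (toSpanSingleton ℝ _ (-1, 0)).coprod (toSpanSingleton ℝ _ (1 + t⁻¹, 1))

/-- `c̊`, in the basis `(u̇, ů)`. -/
def cEven : ℝ × ℝ →ₗ[ℝ] ℝ × ℝ :=
  (toSpanSingleton ℝ _ (1, 1 + t)).coprod (toSpanSingleton ℝ _ (0, -1))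

theorem cOdd_apply (x y : ℝ) : cOdd t (x, y) = (-x + y * (1 + t⁻¹), y) := by
  simp [cOdd]

theorem cEven_apply (x y : ℝ) : cEven t (x, y) = (x, x * (1 + t) - y) := by
  simp [cEven, sub_eq_add_neg]

def orbitAB (j : ℕ) : ℝ × ℝ :=
  (1 / (t ^ j * (1 - t))) • (1 - t ^ (2 * j + 1), t * (1 - t ^ (2 * j)))

def orbitBAB (j : ℕ) : ℝ × ℝ :=
  (1 / (t ^ j * (1 - t))) • (1 - t ^ (2 * j + 1), 1 - t ^ (2 * j + 2))

def orbitBA (j : ℕ) : ℝ × ℝ :=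
  (1 / (t ^ j * (1 - t))) • (1 - t ^ (2 * j), 1 - t ^ (2 * j + 1))

def orbitABA (j : ℕ) : ℝ × ℝ :=
  (1 / (t ^ (j + 1) * (1 - t))) • (1 - t ^ (2 * j + 2), t * (1 - t ^ (2 * j + 1)))

variable {t}

theorem orbitAB_zero (ht1 : t ≠ 1) : orbitAB t 0 = (1, 0) := by
  have : 1 - t ≠ 0 := sub_ne_zero.mpr ht1.symm
  simp [orbitAB, this]

theorem orbitBA_zero (ht1 : t ≠ 1) : orbitBA t 0 = (0, 1) := by
  have : 1 - t ≠ 0 := sub_ne_zero.mpr ht1.symm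
  simp [orbitBA, this]

theorem cEven_orbitAB (j : ℕ) : cEven t (orbitAB t j) = orbitBAB t j := by
  simp only [orbitAB, orbitBAB, map_smul, cEven_apply]
  congr 2
  ring

theorem cOdd_orbitBAB (ht0 : t ≠ 0) (j : ℕ) : cOdd t (orbitBAB t j) = orbitAB t (j + 1) := by
  simp only [orbitBAB, orbitAB, cOdd_apply, Prod.smul_mk, smul_eq_mul, Prod.mk.injEq]
  constructor <;> field_simp <;> ring

theorem cOdd_orbitBA (ht0 : t ≠ 0) (j : ℕ) : cOdd t (orbitBA t j) = orbitABA t j := by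
  simp only [orbitBA, orbitABA, cOdd_apply, Prod.smul_mk, smul_eq_mul, Prod.mk.injEq]
  constructor <;> field_simp <;> ring

theorem cEven_orbitABA (ht0 : t ≠ 0) (j : ℕ) : cEven t (orbitABA t j) = orbitBA t (j + 1) := by
  simp only [orbitABA, orbitBA, cEven_apply, Prod.smul_mk, smul_eq_mul, Prod.mk.injEq]
  constructor <;> field_simp <;> ring

theorem pow_cOdd_mul_cEven_apply (ht0 : t ≠ 0) (ht1 : t ≠ 1) (j : ℕ) :
    ((cOdd t * cEven t) ^ j) (1, 0) = orbitAB t j := by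
  induction j with
  | zero => exact (orbitAB_zero ht1).symm
  | succ j ih =>
    rw [pow_succ', Module.End.mul_apply, Module.End.mul_apply, ih, cEven_orbitAB,
      cOdd_orbitBAB ht0]

theorem pow_cEven_mul_cOdd_apply (ht0 : t ≠ 0) (ht1 : t ≠ 1) (j : ℕ) :
    ((cEven t * cOdd t) ^ j) (0, 1) = orbitBA t j := by
  induction j with
  | zero => exact (orbitBA_zero ht1).symm
  | succ j ih =>
    rw [pow_succ', Module.End.mul_apply, Module.End.mul_apply, ih, cOdd_orbitBA ht0,
      cEven_orbitABA ht0]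

end StarShaped

end

/-- Let `t > 0`, `t ≠ 1`, and let `A, B` be the linear endomorphisms of `ℝ²`
with `A(1,0) = (−1,0)`, `A(0,1) = (1 + t⁻¹, 1)`, `B(1,0) = (1, 1 + t)`, `B(0,1) = (0,−1)`.
Then for every `j ≥ 0`:
`(A∘B)^j (1,0) = (1/(t^j(1−t))) • (1 − t^{2j+1}, t(1 − t^{2j}))`,
`B∘(A∘B)^j (1,0) = (1/(t^j(1−t))) • (1 − t^{2j+1}, 1 − t^{2j+2})`,
`(B∘A)^j (0,1) = (1/(t^j(1−t))) • (1 − t^{2j}, 1 − t^{2j+1})`,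
`A∘(B∘A)^j (0,1) = (1/(t^{j+1}(1−t))) • (1 − t^{2j+2}, t(1 − t^{2j+1}))`. -/
theorem stmt_10 (t : ℝ) (ht : 0 < t) (ht1 : t ≠ 1)
    (A B : (ℝ × ℝ) →ₗ[ℝ] (ℝ × ℝ))
    (hA1 : A (1, 0) = (-1, 0)) (hA2 : A (0, 1) = (1 + t⁻¹, 1))
    (hB1 : B (1, 0) = (1, 1 + t)) (hB2 : B (0, 1) = (0, -1)) :
    ∀ j : ℕ,
      ((A * B) ^ j) (1, 0) =
        (1 / (t ^ j * (1 - t))) • ((1 - t ^ (2 * j + 1), t * (1 - t ^ (2 * j))) : ℝ × ℝ) ∧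
      (B * (A * B) ^ j) (1, 0) =
        (1 / (t ^ j * (1 - t))) • ((1 - t ^ (2 * j + 1), 1 - t ^ (2 * j + 2)) : ℝ × ℝ) ∧
      ((B * A) ^ j) (0, 1) =
        (1 / (t ^ j * (1 - t))) • ((1 - t ^ (2 * j), 1 - t ^ (2 * j + 1)) : ℝ × ℝ) ∧
      (A * (B * A) ^ j) (0, 1) =
        (1 / (t ^ (j + 1) * (1 - t))) •
          ((1 - t ^ (2 * j + 2), t * (1 - t ^ (2 * j + 1))) : ℝ × ℝ) := by
  open StarShaped LinearMap in
  have ht0 : t ≠ 0 := ht.ne'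
  obtain rfl : A = cOdd t :=
    ext_prod_ring (by simp [hA1, cOdd_apply]) (by simp [hA2, cOdd_apply])
  obtain rfl : B = cEven t :=
    ext_prod_ring (by simp [hB1, cEven_apply]) (by simp [hB2, cEven_apply])
  intro j
  refine ⟨pow_cOdd_mul_cEven_apply ht0 ht1 j, ?_, pow_cEven_mul_cOdd_apply ht0 ht1 j, ?_⟩
  · rw [Module.End.mul_apply, pow_cOdd_mul_cEven_apply ht0 ht1, cEven_orbitAB]
    rfl
  · rw [Module.End.mul_apply, pow_cEven_mul_cOdd_apply ht0 ht1, cOdd_orbitBA ht0]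
    rfl
end

section
/- Let t > 0 be real with t ≠ 1, set λ = t + t^{-1}, and for an integer m ≥ 0 set ρ(m) = 1 + (t − t^m)/(1 − t^{m+1}). Then for every integer m ≥ 0, ρ(m+1) ≠ 0 and (ρ(m+1))^{-1} = (t/(t+1)^2) · (λ + 2 − ρ(m)). -/
/-- For `t > 0`, `t ≠ 1`, `λ = t + t⁻¹` and
`ρ(m) = 1 + (t − t^m)/(1 − t^{m+1})`, for every `m ≥ 0` one has `ρ(m+1) ≠ 0` and
`(ρ(m+1))⁻¹ = (t/(t+1)²)·(λ + 2 − ρ(m))`. -/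
theorem stmt_12 (t : ℝ) (ht : 0 < t) (ht1 : t ≠ 1) (lam : ℝ) (hlam : lam = t + t⁻¹)
    (ρ : ℕ → ℝ) (hρ : ∀ m : ℕ, ρ m = 1 + (t - t ^ m) / (1 - t ^ (m + 1))) :
    ∀ m : ℕ, ρ (m + 1) ≠ 0 ∧ (ρ (m + 1))⁻¹ = (t / (t + 1) ^ 2) * (lam + 2 - ρ m) := by
  have ht0 : t ≠ 0 := ne_of_gt ht
  have ht1' : (t + 1) ≠ 0 := by positivity
  have hpow : ∀ n : ℕ, (1 : ℝ) - t ^ (n + 1) ≠ 0 := by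
    intro n
    rcases lt_or_gt_of_ne ht1 with h | h
    · have : t ^ (n + 1) < 1 := pow_lt_one₀ ht.le h (Nat.succ_ne_zero n)
      linarith
    · have : 1 < t ^ (n + 1) := one_lt_pow₀ h (Nat.succ_ne_zero n)
      linarith
  intro m
  have h1 := hpow m
  have h2 := hpow (m + 1)
  have hρ1 : ρ (m + 1) = (1 + t) * (1 - t ^ (m + 1)) / (1 - t ^ (m + 2)) := by
    rw [hρ]
    field_simp
    ring
  have hne : ρ (m + 1) ≠ 0 := by
    rw [hρ1]
    exact div_ne_zero (mul_ne_zero (by linarith) h1) h2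
  refine ⟨hne, inv_eq_of_mul_eq_one_right ?_⟩
  rw [hρ1, hρ m, hlam]
  field_simp
  ring
end
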